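/- Under the hypotheses of the reverse direction of the main theorem, the map f : M → M' defined by f(α + ω) = g(α) + h(ω) satisfies f(t·x + (1−st)·y) = t·f(x) + (1−st)·f(y) for all x, y ∈ M, and hence (together with f(0)=0 and f(s·x)=s·f(x)) f is an isomorphism of Alexander biquandles. -/

import Mathlib

noncomputable section

/-- The Laurent polynomial ring `ℤ[s^{±1}, t^{±1}]` in two variables,
realized as the group algebra of `ℤ × ℤ` over `ℤ`. -/
abbrev L : Type := AddMonoidAlgebra ℤ (ℤ × ℤ)

/-- The variable `s`. -/
def sL : L := AddMonoidAlgebra.single (1, 0) 1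
/-- The variable `t`. -/
def tL : L := AddMonoidAlgebra.single (0, 1) 1
/-- The inverse `s⁻¹`. -/
def sLi : L := AddMonoidAlgebra.single (-1, 0) 1
/-- The inverse `t⁻¹`. -/
def tLi : L := AddMonoidAlgebra.single (0, -1) 1

/-- `s` as a unit of `L`. -/
def sU : Lˣ where
  val := sL
  inv := sLi
  val_inv := by
    simp [sL, sLi, AddMonoidAlgebra.single_mul_single, AddMonoidAlgebra.one_def, Prod.ext_iff, Prod.mk_zero_zero]
  inv_val := by
    simp [sL, sLi, AddMonoidAlgebra.single_mul_single, AddMonoidAlgebra.one_def, Prod.ext_iff, Prod.mk_zero_zero]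

/-- The submodule `(1-st)M`. -/
def Dsub (M : Type) [AddCommGroup M] [Module L M] : Submodule L M :=
  LinearMap.range (LinearMap.lsmul L M (1 - sL * tL))

/-- The `s`-orbit `O_s(X)` of a subset `X ⊆ M`. -/
def Os {M : Type} [AddCommGroup M] [Module L M] (X : Set M) : Set M :=
  { y | ∃ (n : ℤ) (x : M), x ∈ X ∧ y = ((sU ^ n : Lˣ) : L) • x }

/-- `A` is a set of coset representatives for `M/(1-st)M`. -/
def IsCR (M : Type) [AddCommGroup M] [Module L M] (A : Set M) : Prop :=
  ∀ x : M, ∃! a, a ∈ A ∧ x - a ∈ Dsub M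

/-- `f` preserves the four Alexander biquandle operations. -/
def IsBqHom {M M' : Type} [AddCommGroup M] [Module L M] [AddCommGroup M'] [Module L M']
    (f : M → M') : Prop :=
  (∀ x y : M, f (tL • x + (1 - sL * tL) • y) = tL • f x + (1 - sL * tL) • f y) ∧
  (∀ x : M, f (sL • x) = sL • f x) ∧
  (∀ x y : M, f (tLi • x + (1 - sLi * tLi) • y) = tLi • f x + (1 - sLi * tLi) • f y) ∧
  (∀ x : M, f (sLi • x) = sLi • f x)

/-!
Every `x ∈ M` is `α + ω` with `α ∈ A` and `ω ∈ (1-st)M`, so `f` is assembled from the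
bijection `A → A'` and the isomorphism `h`; in particular `f (x + ω) = f x + h ω`. This
translation rule propagates the conditions on `g`, which only concern representatives, to
`f (s • x) = s • f x` and `h ((1-st) • x) = (1-st) • f x` for all `x`. As
`t = s⁻¹ - s⁻¹(1-st)` and `t⁻¹ = s + t⁻¹(1-st)`, `f` then commutes with `t` and `t⁻¹`, and each
biquandle operation `c • x + r(1-st) • y` is preserved.
-/

section Decomposition

open Function Set

variable {R : Type*} [CommRing R] {M M' : Type*} [AddCommGroup M] [Module R M]
  [AddCommGroup M'] [Module R M'] {N : Submodule R M} {N' : Submodule R M'}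
  {A : Set M} {A' : Set M'} {g f : M → M'}

theorem injective_of_forall_add {h : N → N'} (hh : Injective h)
    (hA : ∀ x, ∃ a ∈ A, ∃ ω : N, a + ω = x)
    (hA' : ∀ b₁ ∈ A', ∀ b₂ ∈ A', b₁ - b₂ ∈ N' → b₁ = b₂)
    (hg : InjOn g A) (hgA : MapsTo g A A')
    (hf : ∀ a ∈ A, ∀ ω : N, f (a + ω) = g a + h ω) : Injective f := by
  intro x y hxy
  obtain ⟨a, ha, ω, rfl⟩ := hA x
  obtain ⟨b, hb, ω', rfl⟩ := hA y
  rw [hf a ha, hf b hb] at hxy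
  have hsub : g a - g b ∈ N' := by
    rw [show g a - g b = h ω' - h ω by rw [sub_eq_sub_iff_add_eq_add, hxy, add_comm]]
    exact sub_mem (h ω').2 (h ω).2
  obtain rfl : a = b := hg ha hb (hA' _ (hgA ha) _ (hgA hb) hsub)
  rw [add_right_inj, ← Subtype.ext_iff, hh.eq_iff] at hxy
  rw [hxy]

theorem surjective_of_forall_add {h : N → N'} (hh : Surjective h)
    (hA' : ∀ y, ∃ b ∈ A', ∃ ω : N', b + ω = y) (hgA : SurjOn g A A')
    (hf : ∀ a ∈ A, ∀ ω : N, f (a + ω) = g a + h ω) : Surjective f := by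
  intro y
  obtain ⟨b, hb, ω', rfl⟩ := hA' y
  obtain ⟨a, ha, rfl⟩ := hgA hb
  obtain ⟨ω, rfl⟩ := hh ω'
  exact ⟨a + ω, hf a ha ω⟩

theorem map_add_submodule_of_forall_add (h : N →+ N')
    (hA : ∀ x, ∃ a ∈ A, ∃ ω : N, a + ω = x)
    (hf : ∀ a ∈ A, ∀ ω : N, f (a + ω) = g a + h ω) (x : M) (ω : N) :
    f (x + ω) = f x + h ω := by
  obtain ⟨a, ha, ω', rfl⟩ := hA x
  rw [add_assoc, ← Submodule.coe_add, hf a ha, hf a ha, map_add, Submodule.coe_add, add_assoc]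

theorem map_smul_of_forall_mem (h : N →ₗ[R] N') (hfN : ∀ x (ω : N), f (x + ω) = f x + h ω)
    (hA : ∀ x, ∃ a ∈ A, ∃ ω : N, a + ω = x) {c : R} (hc : ∀ a ∈ A, f (c • a) = c • f a)
    (x : M) : f (c • x) = c • f x := by
  obtain ⟨a, ha, ω, rfl⟩ := hA x
  rw [smul_add, ← Submodule.coe_smul, hfN, hc a ha, map_smul, Submodule.coe_smul, hfN, smul_add]

theorem map_smul_mem_of_map_smul_add (h : N →+ N') (hA : ∀ x, ∃ a ∈ A, ∃ ω : N, a + ω = x)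
    (hf : ∀ a ∈ A, ∀ ω : N, f (a + ω) = g a + h ω) {c : R}
    (hc : ∀ a ∈ A, ∀ ω : N, c • a + ω ∈ A → g (c • a + ω) = c • g a + h ω) {a : M} (ha : a ∈ A) :
    f (c • a) = c • f a := by
  obtain ⟨b, hb, ω, hω⟩ := hA (c • a)
  have hfa : f a = g a := by simpa using hf a ha 0
  have hb' : c • a + ↑(-ω) = b := by rw [← hω, Submodule.coe_neg, add_neg_cancel_right]
  have hgb : g b = c • g a + h (-ω) := hb' ▸ hc a ha (-ω) (hb' ▸ hb)
  rw [← hω, hf b hb, hgb, hfa, map_neg, Submodule.coe_neg, neg_add_cancel_right]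

theorem map_smul_mem_eq_smul (h : N →ₗ[R] N') (hfN : ∀ x (ω : N), f (x + ω) = f x + h ω)
    (hA : ∀ x, ∃ a ∈ A, ∃ ω : N, a + ω = x) {d : R} (hd : ∀ x, d • x ∈ N)
    (hdA : ∀ a ∈ A, h ⟨d • a, hd a⟩ = d • f a) (x : M) : h ⟨d • x, hd x⟩ = d • f x := by
  obtain ⟨a, ha, ω, rfl⟩ := hA x
  have : (⟨d • (a + ω), hd _⟩ : N) = ⟨d • a, hd a⟩ + d • ω := Subtype.ext (smul_add d a ω)
  rw [this, map_add, map_smul, Submodule.coe_add, hdA a ha, Submodule.coe_smul, hfN, smul_add]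

theorem map_smul_add_mul_smul (h : N →ₗ[R] N') (hfN : ∀ x (ω : N), f (x + ω) = f x + h ω)
    {d : R} (hd : ∀ x, d • x ∈ N) (hdf : ∀ x, h ⟨d • x, hd x⟩ = d • f x)
    {c : R} (hc : ∀ x, f (c • x) = c • f x) (r : R) (x y : M) :
    f (c • x + (r * d) • y) = c • f x + (r * d) • f y := by
  have : (r * d) • y = ((r • ⟨d • y, hd y⟩ : N) : M) := mul_smul r d y
  rw [this, hfN, hc, map_smul, Submodule.coe_smul, hdf, mul_smul]

theorem map_add_mul_smul (h : N →ₗ[R] N') (hfN : ∀ x (ω : N), f (x + ω) = f x + h ω)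
    {d : R} (hd : ∀ x, d • x ∈ N) (hdf : ∀ x, h ⟨d • x, hd x⟩ = d • f x)
    {c : R} (hc : ∀ x, f (c • x) = c • f x) (r : R) (x : M) :
    f ((c + r * d) • x) = (c + r * d) • f x := by
  simpa only [add_smul] using map_smul_add_mul_smul h hfN hd hdf hc r x x

theorem map_inv_smul_of_map_smul {u : Rˣ} (hu : ∀ x, f ((u : R) • x) = (u : R) • f x) (x : M) :
    f ((↑u⁻¹ : R) • x) = (↑u⁻¹ : R) • f x :=
  calc f ((↑u⁻¹ : R) • x) = (↑u⁻¹ : R) • (u : R) • f ((↑u⁻¹ : R) • x) := by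
        rw [smul_smul, u.inv_mul, one_smul]
    _ = (↑u⁻¹ : R) • f x := by rw [← hu, smul_smul, u.mul_inv, one_smul]

end Decomposition

theorem subset_Os {M : Type} [AddCommGroup M] [Module L M] (X : Set M) : X ⊆ Os X :=
  fun x hx => ⟨0, x, hx, by rw [zpow_zero, Units.val_one, one_smul]⟩

namespace IsCR

variable {M : Type} [AddCommGroup M] [Module L M] {A : Set M}

theorem exists_add (hA : IsCR M A) (x : M) : ∃ a ∈ A, ∃ ω : Dsub M, a + ω = x := by
  obtain ⟨a, ⟨ha, hxa⟩, -⟩ := hA x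
  exact ⟨a, ha, ⟨x - a, hxa⟩, add_sub_cancel a x⟩

theorem eq_of_sub_mem (hA : IsCR M A) {b₁ b₂ : M} (h₁ : b₁ ∈ A) (h₂ : b₂ ∈ A)
    (h₁₂ : b₁ - b₂ ∈ Dsub M) : b₁ = b₂ :=
  (hA b₁).unique ⟨h₁, by rw [sub_self]; exact zero_mem _⟩ ⟨h₂, h₁₂⟩

end IsCR

theorem sL_mul_sLi : sL * sLi = 1 := sU.val_inv

theorem tL_mul_tLi : tL * tLi = 1 := by
  simp [tL, tLi, AddMonoidAlgebra.single_mul_single, AddMonoidAlgebra.one_def, Prod.mk_zero_zero]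

theorem tL_eq : tL = sLi + -sLi * (1 - sL * tL) := by
  linear_combination (-tL) * sL_mul_sLi

theorem tLi_eq : tLi = sL + tLi * (1 - sL * tL) := by
  linear_combination sL * tL_mul_tLi

theorem one_sub_sLi_mul_tLi : 1 - sLi * tLi = -(sLi * tLi) * (1 - sL * tL) := by
  linear_combination (-(tL * tLi)) * sL_mul_sLi - tL_mul_tLi

theorem stmt_14_general
    {M M' : Type} [AddCommGroup M] [Module L M] [AddCommGroup M'] [Module L M']
    (h : Dsub M ≃ₗ[L] Dsub M')
    (A : Set M) (hA : IsCR M A)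
    (A' : Set M') (hA' : IsCR M' A')
    (g : M → M') (hg : Set.BijOn g (Os A) (Os A')) (hgA : g '' A = A')
    (hg1 : ∀ α ∈ A, (1 - sL * tL) • g α = (h ⟨(1 - sL * tL) • α, ⟨α, rfl⟩⟩ : M'))
    (hg2 : ∀ α ∈ A, ∀ ω (hω : ω ∈ Dsub M), sL • α + ω ∈ Os A →
      g (sL • α + ω) = sL • g α + (h ⟨ω, hω⟩ : M'))
    (f : M → M')
    (hf : ∀ α ∈ A, ∀ ω (hω : ω ∈ Dsub M), f (α + ω) = g α + (h ⟨ω, hω⟩ : M')) :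
    (∀ x y : M, f (tL • x + (1 - sL * tL) • y) = tL • f x + (1 - sL * tL) • f y) ∧
    Function.Bijective f ∧ IsBqHom f := by
  have hf' : ∀ α ∈ A, ∀ ω : Dsub M, f (α + ω) = g α + h ω := fun α hα ω => hf α hα ω ω.2
  have hfA : ∀ α ∈ A, f α = g α := fun α hα => by simpa using hf' α hα 0
  have hd : ∀ x : M, (1 - sL * tL) • x ∈ Dsub M := fun x => ⟨x, rfl⟩
  have hfN := map_add_submodule_of_forall_add h.toLinearMap.toAddMonoidHom hA.exists_add hf'
  have hS : ∀ x, f (sL • x) = sL • f x :=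
    map_smul_of_forall_mem h.toLinearMap hfN hA.exists_add fun α hα =>
      map_smul_mem_of_map_smul_add h.toLinearMap.toAddMonoidHom hA.exists_add hf'
        (fun α hα ω hω => hg2 α hα ω ω.2 (subset_Os A hω)) hα
  have hSi : ∀ x, f (sLi • x) = sLi • f x := map_inv_smul_of_map_smul (u := sU) hS
  have hD : ∀ x, h ⟨(1 - sL * tL) • x, hd x⟩ = (1 - sL * tL) • f x :=
    map_smul_mem_eq_smul h.toLinearMap hfN hA.exists_add hd fun α hα => by
      rw [hfA α hα]
      exact (hg1 α hα).symm
  have hT : ∀ x, f (tL • x) = tL • f x := by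
    simpa only [← tL_eq] using map_add_mul_smul h.toLinearMap hfN hd hD hSi (-sLi)
  have hTi : ∀ x, f (tLi • x) = tLi • f x := by
    simpa only [← tLi_eq] using map_add_mul_smul h.toLinearMap hfN hd hD hS tLi
  have op : ∀ x y : M, f (tL • x + (1 - sL * tL) • y) = tL • f x + (1 - sL * tL) • f y := by
    simpa only [one_mul] using map_smul_add_mul_smul h.toLinearMap hfN hd hD hT 1
  refine ⟨op, ⟨?_, ?_⟩, op, hS, fun x y => ?_, hSi⟩
  · exact injective_of_forall_add h.injective hA.exists_add
      (fun _ h₁ _ h₂ => hA'.eq_of_sub_mem h₁ h₂) (hg.injOn.mono (subset_Os A))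
      (hgA ▸ Set.mapsTo_image g A) hf'
  · exact surjective_of_forall_add h.surjective hA'.exists_add (hgA ▸ Set.surjOn_image g A) hf'
  · rw [one_sub_sLi_mul_tLi]
    exact map_smul_add_mul_smul h.toLinearMap hfN hd hD hTi _ x y

theorem stmt_14
    {M M' : Type} [AddCommGroup M] [Module L M] [AddCommGroup M'] [Module L M']
    (h : Dsub M ≃ₗ[L] Dsub M')
    (A : Set M) (hA : IsCR M A) (h0A : (0 : M) ∈ A)
    (A' : Set M') (hA' : IsCR M' A')
    (g : M → M') (hg : Set.BijOn g (Os A) (Os A')) (hgA : g '' A = A')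
    (hg1 : ∀ α ∈ A, (1 - sL * tL) • g α = (h ⟨(1 - sL * tL) • α, ⟨α, rfl⟩⟩ : M'))
    (hg2 : ∀ α ∈ A, ∀ ω (hω : ω ∈ Dsub M), sL • α + ω ∈ Os A →
      g (sL • α + ω) = sL • g α + (h ⟨ω, hω⟩ : M'))
    (f : M → M')
    (hf : ∀ α ∈ A, ∀ ω (hω : ω ∈ Dsub M), f (α + ω) = g α + (h ⟨ω, hω⟩ : M')) :
    (∀ x y : M, f (tL • x + (1 - sL * tL) • y) = tL • f x + (1 - sL * tL) • f y) ∧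
    Function.Bijective f ∧ IsBqHom f :=
  stmt_14_general h A hA A' hA' g hg hgA hg1 hg2 f hf
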